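/- arXiv:1405.3682 — 2 statements merged into one kernel-verified Lean document; each statement's English description precedes it below -/
import Mathlib

section
/- Let n ≥ 1 and λ ∈ [0, 2π/n). If F ∈ D̄_n(λ), then all zeros of Δ_λ^n[F] lie in the closed unit disk. If moreover F ∈ D_n(λ), then all zeros of Δ_λ^n[F] lie in the open unit disk 𝔻. -/
open Polynomial Complex Finset
open scoped Classical

noncomputable section

/-- `uexp t = e^{it}`. -/
def uexp (t : ℝ) : ℂ := Complex.exp (Complex.I * t)

/-- Angular distance between two angles, measured on the circle `ℝ / 2πℤ`. -/
def angDist (x y : ℝ) : ℝ := ‖((x - y : ℝ) : AddCircle (2 * Real.pi))‖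

/-- `polyOn n Ω` : polynomials of degree exactly `n` with all zeros in `Ω`. -/
def polyOn (n : ℕ) (Ω : Set ℂ) : Set (Polynomial ℂ) :=
  {P | P.natDegree = n ∧ ∀ z : ℂ, P.IsRoot z → z ∈ Ω}

/-- `polyLe n Ω` : nonzero polynomials of degree at most `n` with all zeros in `Ω`. -/
def polyLe (n : ℕ) (Ω : Set ℂ) : Set (Polynomial ℂ) :=
  {P | P ≠ 0 ∧ P.natDegree ≤ n ∧ ∀ z : ℂ, P.IsRoot z → z ∈ Ω}

/-- Suffridge's class `T̄_n(λ)`. -/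
def Tbar (n : ℕ) (lam : ℝ) : Set (Polynomial ℂ) :=
  {P | ∃ (a : ℂ) (θ : Fin n → ℝ), a ≠ 0 ∧
    P = C a * ∏ j, (X - C (uexp (θ j))) ∧
    ∀ j k, j ≠ k → lam ≤ angDist (θ j) (θ k)}

/-- Suffridge's class `T_n(λ)`. -/
def Tstrict (n : ℕ) (lam : ℝ) : Set (Polynomial ℂ) :=
  {P | ∃ (a : ℂ) (θ : Fin n → ℝ), a ≠ 0 ∧
    P = C a * ∏ j, (X - C (uexp (θ j))) ∧
    ∀ j k, j ≠ k → lam < angDist (θ j) (θ k)}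

/-- The quantity `e^{-inλ/2} F₊(z)/F₋(z)`. -/
def dQuot (n : ℕ) (lam : ℝ) (F : Polynomial ℂ) (z : ℂ) : ℂ :=
  uexp (-(n * lam) / 2) * F.eval (uexp (lam / 2) * z) / F.eval (uexp (-(lam / 2)) * z)

/-- The class `D̄_n(λ)` for `λ ∈ [0, 2π/n]`. -/
def Dbar (n : ℕ) (lam : ℝ) : Set (Polynomial ℂ) :=
  if lam = 0 then polyOn n {z | ‖z‖ ≤ 1}
  else if lam = 2 * Real.pi / n then
    {P | ∃ a b : ℂ, a ≠ 0 ∧ ‖b‖ ≤ 1 ∧ P = C a * (X ^ n - C b)}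
  else {P | P.natDegree = n ∧ ∀ z : ℂ, 1 < ‖z‖ → 0 < (dQuot n lam P z).im}

/-- The class `D_n(λ)` for `λ ∈ [0, 2π/n)`. -/
def Dset (n : ℕ) (lam : ℝ) : Set (Polynomial ℂ) :=
  Tstrict n lam ∪
    (if lam = 0 then polyOn n {z | ‖z‖ < 1}
     else {P | P.natDegree = n ∧ ∀ z : ℂ, 1 ≤ ‖z‖ → 0 < (dQuot n lam P z).im})

/-- `Q_n(λ; z) = ∏_{j=1}^n (1 + e^{i(2j-n-1)λ/2} z)`. -/
def Qpoly (n : ℕ) (lam : ℝ) : Polynomial ℂ :=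
  ∏ j ∈ Finset.range n, (1 + C (uexp ((2 * (j : ℝ) + 1 - n) * lam / 2)) * X)

/-- The coefficients `C_k^{(n)}(λ)` of `Q_n(λ; ·)`. -/
def Ccoef (n k : ℕ) (lam : ℝ) : ℂ := (Qpoly n lam).coeff k

/-- The Suffridge convolution `F *_λ G` of two degree-`n` polynomials. -/
def lamConv (n : ℕ) (lam : ℝ) (F G : Polynomial ℂ) : Polynomial ℂ :=
  ∑ k ∈ Finset.range (n + 1), C (F.coeff k * G.coeff k / Ccoef n k lam) * X ^ k

/-- `preOf n lam f = f * Q_n(λ;·) = ∑ C_k^{(n)}(λ) a_k z^k`; so `f` belongs to the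
pre-coefficient class `P𝒞_n(λ)` iff `preOf n lam f ∈ 𝒞_n(λ)`. -/
def preOf (n : ℕ) (lam : ℝ) (f : Polynomial ℂ) : Polynomial ℂ :=
  ∑ k ∈ Finset.range (n + 1), C (Ccoef n k lam * f.coeff k) * X ^ k

/-- Pre-extremal polynomials `a ∑_{k=0}^n b^k z^k`, `a ≠ 0`, `|b| = 1`. -/
def PreExtremal (n : ℕ) (f : Polynomial ℂ) : Prop :=
  ∃ a b : ℂ, a ≠ 0 ∧ ‖b‖ = 1 ∧
    f = C a * ∑ k ∈ Finset.range (n + 1), C (b ^ k) * X ^ k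

/-- The `n`-inverse `F^{*n}(z) = z^n conj (F (1/ conj z))`. -/
def nInv (n : ℕ) (F : Polynomial ℂ) : Polynomial ℂ :=
  (F.reflect n).map (starRingEnd ℂ)

/-- `F₊(z) = F(e^{iλ/2} z)` as a polynomial. -/
def plusPoly (lam : ℝ) (F : Polynomial ℂ) : Polynomial ℂ :=
  F.comp (C (uexp (lam / 2)) * X)

/-- `F₋(z) = F(e^{-iλ/2} z)` as a polynomial. -/
def minusPoly (lam : ℝ) (F : Polynomial ℂ) : Polynomial ℂ :=
  F.comp (C (uexp (-(lam / 2))) * X)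

/-- The operator `Δ_λ^n[F](z) = (F₊(z) - F₋(z)) / (2 i z sin(nλ/2))`, with
`Δ_0^n[F] = F'/n`. -/
def Delta (n : ℕ) (lam : ℝ) (F : Polynomial ℂ) : Polynomial ℂ :=
  if lam = 0 then C ((n : ℂ)⁻¹) * derivative F
  else C ((2 * Complex.I * (Real.sin (n * lam / 2) : ℂ))⁻¹) *
    (plusPoly lam F - minusPoly lam F).divX

/-- `P` and `Q` (of degree `n`, zeros on the unit circle) have strictly interspersed
zeros: they are coprime and their zeros alternate on the unit circle. -/
def StrictIntersp (n : ℕ) (P Q : Polynomial ℂ) : Prop :=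
  IsCoprime P Q ∧ ∃ (a b : ℂ) (θ φ : ℕ → ℝ), a ≠ 0 ∧ b ≠ 0 ∧
    P = C a * ∏ j ∈ Finset.range n, (X - C (uexp (θ j))) ∧
    Q = C b * ∏ j ∈ Finset.range n, (X - C (uexp (φ j))) ∧
    (∀ j, j < n → θ j < φ j) ∧
    (∀ j, j + 1 < n → φ j < θ (j + 1)) ∧
    (0 < n → φ (n - 1) < θ 0 + 2 * Real.pi)

/-- The Grace–Szegő convolution of two polynomials of degree ≤ n. -/
def GSconv (n : ℕ) (F G : Polynomial ℂ) : Polynomial ℂ :=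
  ∑ k ∈ Finset.range (n + 1), C (F.coeff k * G.coeff k / (n.choose k : ℂ)) * X ^ k

/-- `Ω_{τ,γ}` : the image of the unit disk under `z ↦ τz/(1+γz)`. -/
def OmegaSet (τ : ℂ) (γ : ℝ) : Set ℂ :=
  (fun z => τ * z / (1 + (γ : ℂ) * z)) '' Metric.ball 0 1

/-- `I_γ = {z : |z| + γ|1+z| < 1}`. -/
def Iset (γ : ℝ) : Set ℂ := {z | ‖z‖ + γ * ‖1 + z‖ < 1}

/-- `O_γ = {z : |z| - γ|1+z| > 1}`. -/
def Oset (γ : ℝ) : Set ℂ := {z | 1 < ‖z‖ - γ * ‖1 + z‖}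

end

/-!
For `λ = 0`, `Δ` is `F'/n` and the claim is of Gauss–Lucas type: if `F(z) ≠ 0` and every zero `r`
of `F` has `|r| ≤ |z|`, then `Re (z F'(z)/F(z)) = ∑ Re (z/(z - r)) > 0`, so `F'(z) ≠ 0`; zeros of
an element of `T_n(0)` on the unit circle are simple.

For `λ > 0`, a zero `z` of `Δ` satisfies `F₊(z) = F₋(z)`, so `e^{-inλ/2} F₊(z)/F₋(z)` has imaginary
part `-sin(nλ/2) < 0`, or is `0` when `F₋(z) = 0` (Lean's `x / 0 = 0`). This rules out `|z| > 1`
for `F ∈ D̄_n(λ)`. On `|z| = 1` it contradicts the limit from outside, unless `F₋(z) = F₊(z) = 0`,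
i.e. `F` has two zeros at angular distance `λ`, which `T_n(λ)` excludes.
-/

lemma uexp_add (s t : ℝ) : uexp (s + t) = uexp s * uexp t := by
  rw [uexp, uexp, uexp, ← Complex.exp_add]; push_cast; ring_nf

lemma uexp_eq_uexp_iff {s t : ℝ} : uexp s = uexp t ↔ ∃ m : ℤ, s = t + m * (2 * Real.pi) := by
  rw [uexp, uexp, mul_comm I, mul_comm I, ← Circle.coe_exp, ← Circle.coe_exp,
    Circle.coe_inj, Circle.exp_eq_exp]

lemma angDist_le_abs_of_uexp_eq {x y t : ℝ} (h : uexp x = uexp (y + t)) :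
    angDist x y ≤ |t| := by
  obtain ⟨m, hm⟩ := uexp_eq_uexp_iff.1 h
  have hxy : ((x - y : ℝ) : AddCircle (2 * Real.pi)) = (t : AddCircle (2 * Real.pi)) := by
    rw [hm, show y + t + m * (2 * Real.pi) - y = t + m • (2 * Real.pi) by simp; ring,
      AddCircle.coe_add, AddCircle.coe_zsmul, AddCircle.coe_period, smul_zero, add_zero]
  rw [angDist, hxy, ← Real.norm_eq_abs]
  exact QuotientAddGroup.norm_mk_le_norm

lemma isRoot_C_mul_prod_X_sub_C_iff {n : ℕ} {a z : ℂ} (ha : a ≠ 0) (w : Fin n → ℂ) :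
    (C a * ∏ j, (X - C (w j))).IsRoot z ↔ ∃ j, z = w j := by
  simp [eval_prod, Finset.prod_eq_zero_iff, ha, sub_eq_zero]

section Tstrict

variable {n : ℕ} {lam : ℝ} {F : ℂ[X]} {z : ℂ}

lemma separable_of_mem_Tstrict (hlam : 0 ≤ lam) (hF : F ∈ Tstrict n lam) : F.Separable := by
  obtain ⟨a, θ, ha, rfl, hsep⟩ := hF
  have hinj : Function.Injective fun j => uexp (θ j) := by
    intro j k hjk
    by_contra hne
    have := angDist_le_abs_of_uexp_eq (t := 0) (by simpa using hjk)
    linarith [hsep j k hne, abs_zero (α := ℝ)]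
  rw [mul_comm]
  exact (separable_prod_X_sub_C_iff.2 hinj).mul_unit (isUnit_C.2 ha.isUnit)

lemma not_isRoot_uexp_mul_of_mem_Tstrict (h0 : 0 < lam) (h1 : lam < 2 * Real.pi)
    (hF : F ∈ Tstrict n lam) (hz : F.IsRoot z) : ¬ F.IsRoot (uexp lam * z) := by
  obtain ⟨a, θ, ha, rfl, hsep⟩ := hF
  obtain ⟨j, rfl⟩ := (isRoot_C_mul_prod_X_sub_C_iff ha _).1 hz
  rintro hrot
  obtain ⟨k, hk⟩ := (isRoot_C_mul_prod_X_sub_C_iff ha _).1 hrot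
  have hk' : uexp (θ k) = uexp (θ j + lam) := by rw [← hk, uexp_add, mul_comm]
  have hjk : k ≠ j := by
    rintro rfl
    obtain ⟨m, hm⟩ := uexp_eq_uexp_iff.1 hk'
    have hm0 : (0 : ℝ) < -m := by nlinarith [Real.pi_pos]
    have hm1 : (-m : ℝ) < 1 := by nlinarith [Real.pi_pos]
    norm_cast at hm0 hm1
    omega
  linarith [hsep k j hjk, angDist_le_abs_of_uexp_eq hk', abs_of_pos h0]

end Tstrict

lemma Complex.re_div_sub_pos {z r : ℂ} (hne : z ≠ r) (hle : ‖r‖ ≤ ‖z‖) :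
    0 < (z / (z - r)).re := by
  have hd : 0 < normSq (z - r) := normSq_pos.2 (sub_ne_zero.2 hne)
  have hsq : normSq r ≤ normSq z := by
    rw [← Complex.sq_norm, ← Complex.sq_norm]; gcongr
  -- `Re (z * conj (z - r)) = (|z|² - |r|² + |z - r|²) / 2`
  rw [div_re, ← add_div]
  apply div_pos _ hd
  simp only [normSq_apply, sub_re, sub_im] at hd hsq ⊢
  nlinarith

namespace Polynomial

variable {F : ℂ[X]} {z : ℂ}

lemma eval_derivative_ne_zero_of_norm_roots_le (hF : 0 < F.natDegree) (hz : F.eval z ≠ 0)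
    (hroots : ∀ r ∈ F.roots, ‖r‖ ≤ ‖z‖) : F.derivative.eval z ≠ 0 := by
  have hsplit := IsAlgClosed.splits F
  intro hder
  have hsum : (F.roots.map fun r => z / (z - r)).sum = 0 := by
    have h := hsplit.eval_derivative_eq_eval_mul_sum hz
    rw [hder, eq_comm, mul_eq_zero, or_iff_right hz] at h
    simp_rw [div_eq_mul_one_div z, Multiset.sum_map_mul_left, h, mul_zero]
  have hpos : 0 < (F.roots.map fun r => (z / (z - r)).re).sum := by
    simpa using Multiset.sum_lt_sum_of_nonempty (f := fun _ => (0 : ℝ))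
      (hsplit.roots_ne_zero hF.ne') fun r hr =>
        re_div_sub_pos (by rintro rfl; exact hz (isRoot_of_mem_roots hr)) (hroots r hr)
  have hre := congrArg reAddGroupHom hsum
  rw [map_multiset_sum, Multiset.map_map, map_zero] at hre
  exact hpos.ne' hre

variable {ρ : ℝ}

lemma norm_le_of_isRoot_derivative (hF : 0 < F.natDegree) (hroots : ∀ r, F.IsRoot r → ‖r‖ ≤ ρ)
    (hz : F.derivative.IsRoot z) : ‖z‖ ≤ ρ := by
  by_contra! h
  refine eval_derivative_ne_zero_of_norm_roots_le hF (fun h0 => ?_)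
    (fun r hr => (hroots r (isRoot_of_mem_roots hr)).trans h.le) hz
  exact (hroots z h0).not_gt h

lemma norm_lt_of_isRoot_derivative (hF : 0 < F.natDegree) (hroots : ∀ r, F.IsRoot r → ‖r‖ ≤ ρ)
    (hsimple : ∀ r, F.IsRoot r → ‖r‖ = ρ → ¬ F.derivative.IsRoot r)
    (hz : F.derivative.IsRoot z) : ‖z‖ < ρ := by
  refine (norm_le_of_isRoot_derivative hF hroots hz).lt_of_ne fun h => ?_
  by_cases hFz : F.IsRoot z
  · exact hsimple z hFz h hz
  · exact eval_derivative_ne_zero_of_norm_roots_le hF hFz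
      (fun r hr => h ▸ hroots r (isRoot_of_mem_roots hr)) hz

end Polynomial

section Delta

variable {n : ℕ} {lam : ℝ} {F : ℂ[X]} {z : ℂ}

lemma isRoot_derivative_of_isRoot_Delta_zero (hn : n ≠ 0) (hz : (Delta n 0 F).IsRoot z) :
    F.derivative.IsRoot z := by
  simpa [Delta, hn] using hz

lemma eval_uexp_mul_eq_of_isRoot_Delta (hlam : lam ≠ 0) (hsin : Real.sin (n * lam / 2) ≠ 0)
    (hz : (Delta n lam F).IsRoot z) :
    F.eval (uexp (lam / 2) * z) = F.eval (uexp (-(lam / 2)) * z) := by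
  set p := plusPoly lam F - minusPoly lam F
  have hp0 : p.coeff 0 = 0 := by
    simp [p, coeff_zero_eq_eval_zero, plusPoly, minusPoly, eval_comp]
  have hdivX : p.divX.IsRoot z := by
    simp only [Delta, hlam, if_false, IsRoot, eval_mul, eval_C, mul_eq_zero, inv_eq_zero,
      two_ne_zero, I_ne_zero, ofReal_eq_zero, hsin, or_self, false_or] at hz
    exact hz
  have hpz : p.eval z = 0 := by
    rw [← divX_mul_X_add p, hp0]
    simp [hdivX.eq_zero]
  simpa [p, plusPoly, minusPoly, eval_comp, sub_eq_zero] using hpz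

lemma dQuot_im_of_eval_eq (heq : F.eval (uexp (lam / 2) * z) = F.eval (uexp (-(lam / 2)) * z))
    (hden : F.eval (uexp (-(lam / 2)) * z) ≠ 0) :
    (dQuot n lam F z).im = -Real.sin (n * lam / 2) := by
  rw [dQuot, heq, mul_div_assoc, div_self hden, mul_one, uexp, mul_comm,
    exp_ofReal_mul_I_im, neg_div, Real.sin_neg]

lemma dQuot_im_nonpos_of_isRoot_Delta (hlam : lam ≠ 0) (hsin : 0 < Real.sin (n * lam / 2))
    (hz : (Delta n lam F).IsRoot z) : (dQuot n lam F z).im ≤ 0 := by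
  have heq := eval_uexp_mul_eq_of_isRoot_Delta hlam hsin.ne' hz
  by_cases hden : F.eval (uexp (-(lam / 2)) * z) = 0
  · simp [dQuot, hden]
  · rw [dQuot_im_of_eval_eq heq hden]
    linarith

lemma dQuot_im_nonneg_of_norm_eq_one (hF : ∀ w : ℂ, 1 < ‖w‖ → 0 < (dQuot n lam F w).im)
    (hden : F.eval (uexp (-(lam / 2)) * z) ≠ 0) (hz : ‖z‖ = 1) :
    0 ≤ (dQuot n lam F z).im := by
  have hcont : ContinuousAt (fun t : ℝ => (dQuot n lam F (t * z)).im) 1 := by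
    unfold dQuot
    fun_prop (disch := simpa using hden)
  have hout : ∀ t ∈ Set.Ioi (1 : ℝ), 0 ≤ (dQuot n lam F (t * z)).im := fun t (ht : 1 < t) =>
    (hF _ (by simpa [norm_mul, hz, abs_of_pos (one_pos.trans ht)] using ht)).le
  simpa using ge_of_tendsto (hcont.tendsto.mono_left nhdsWithin_le_nhds)
    (eventually_nhdsWithin_of_forall hout)

lemma not_isRoot_Delta_of_mem_Tstrict (h0 : 0 < lam) (h1 : lam < 2 * Real.pi)
    (hsin : 0 < Real.sin (n * lam / 2)) (hT : F ∈ Tstrict n lam)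
    (hF : ∀ w : ℂ, 1 < ‖w‖ → 0 < (dQuot n lam F w).im) (hz : ‖z‖ = 1) :
    ¬ (Delta n lam F).IsRoot z := by
  intro hroot
  have heq := eval_uexp_mul_eq_of_isRoot_Delta h0.ne' hsin.ne' hroot
  by_cases hden : F.eval (uexp (-(lam / 2)) * z) = 0
  · refine not_isRoot_uexp_mul_of_mem_Tstrict h0 h1 hT hden ?_
    rw [IsRoot, ← mul_assoc, ← uexp_add, show lam + -(lam / 2) = lam / 2 by ring, heq, hden]
  · have hnonneg := dQuot_im_nonneg_of_norm_eq_one hF hden hz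
    rw [dQuot_im_of_eval_eq heq hden] at hnonneg
    linarith

end Delta

theorem stmt7_general (n : ℕ) (lam : ℝ) (h0 : 0 ≤ lam) (h1 : lam < 2 * Real.pi / n)
    (F : Polynomial ℂ) (hF : F ∈ Dbar n lam) :
    (∀ z : ℂ, (Delta n lam F).IsRoot z → ‖z‖ ≤ 1) ∧
      (F ∈ Dset n lam → ∀ z : ℂ, (Delta n lam F).IsRoot z → ‖z‖ < 1) := by
  have hn : 0 < n := Nat.pos_of_ne_zero fun h => by simp [h] at h1; linarith
  rcases h0.eq_or_lt with rfl | hlam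
  · rw [Dbar, if_pos rfl] at hF
    have hdeg : 0 < F.natDegree := hF.1 ▸ hn
    have hroots : ∀ r, F.IsRoot r → ‖r‖ ≤ 1 := hF.2
    refine ⟨fun z hz => norm_le_of_isRoot_derivative hdeg hroots
      (isRoot_derivative_of_isRoot_Delta_zero hn.ne' hz), fun hD z hz => ?_⟩
    refine norm_lt_of_isRoot_derivative hdeg hroots ?_
      (isRoot_derivative_of_isRoot_Delta_zero hn.ne' hz)
    rcases hD with hT | hD
    · exact fun r hr _ => (separable_of_mem_Tstrict le_rfl hT).aeval_derivative_ne_zero hr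
    · rw [if_pos rfl] at hD
      exact fun r hr h _ => (hD.2 r hr).ne h
  · have hsin : 0 < Real.sin (n * lam / 2) := by
      have : n * lam < 2 * Real.pi := by rwa [lt_div_iff₀ (by positivity), mul_comm] at h1
      exact Real.sin_pos_of_pos_of_lt_pi (by positivity) (by linarith)
    have h2pi : lam < 2 * Real.pi :=
      h1.trans_le (div_le_self (by positivity) (by exact_mod_cast hn))
    rw [Dbar, if_neg hlam.ne', if_neg h1.ne] at hF
    have hle : ∀ z, (Delta n lam F).IsRoot z → ‖z‖ ≤ 1 := fun z hz => not_lt.1 fun h =>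
      (hF.2 z h).not_ge (dQuot_im_nonpos_of_isRoot_Delta hlam.ne' hsin hz)
    refine ⟨hle, fun hD z hz => (hle z hz).lt_of_ne fun h => ?_⟩
    rcases hD with hT | hD
    · exact not_isRoot_Delta_of_mem_Tstrict hlam h2pi hsin hT hF.2 h hz
    · rw [if_neg hlam.ne'] at hD
      exact (hD.2 z h.ge).not_ge (dQuot_im_nonpos_of_isRoot_Delta hlam.ne' hsin hz)

theorem stmt7 (n : ℕ) (hn : 1 ≤ n) (lam : ℝ) (h0 : 0 ≤ lam) (h1 : lam < 2 * Real.pi / n)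
    (F : Polynomial ℂ) (hF : F ∈ Dbar n lam) :
    (∀ z : ℂ, (Delta n lam F).IsRoot z → ‖z‖ ≤ 1) ∧
      (F ∈ Dset n lam → ∀ z : ℂ, (Delta n lam F).IsRoot z → ‖z‖ < 1) :=
  stmt7_general n lam h0 h1 F hF
end

section
/- Let n ≥ 1, λ ∈ (0, 2π/n), P, Q ∈ π_n(𝕋) with c_P ≠ c_Q, F := P − Q, S := P_+·Q_− − P_−·Q_+, and T := F_+·(F^{*n})_− − F_−·(F^{*n})_+. If F ∈ D_n(λ) \ T_n(λ), then each of S and T has exactly n−1 critical points (zeros of its derivative, counted with multiplicity) in the open unit disk 𝔻. -/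
open Polynomial Complex Finset
open scoped Classical

/-!
Since `c_P P` and `c_Q Q` are `n`-self-inversive, `P^{*n} = c_P² P` and `Q^{*n} = c_Q² Q`. Hence
`T = (c_P² - c_Q²) S`, where `c_P² ≠ c_Q²` because `t_P, t_Q ∈ [0, π)`, and `S` is
`2n`-self-inversive: `z^{2n} conj S(z) = c_P² c_Q² S(z)` on `𝕋`. On `𝕋` one has
`T(z) = 2i z^n Im w` with `w = |F₋(z)|² e^{-inλ/2} F₊(z)/F₋(z)`, so the condition defining `D_n(λ)`
makes `S` zero-free on `𝕋`.

For a `2n`-self-inversive `S` without zeros on `𝕋`, `Re (z S'(z)/S(z)) = n` on `𝕋`. By the argument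
principle `S` has `n` zeros in `𝔻`, and since `z S'/S` maps `𝕋` into the right half-plane, `z S'`
has as many zeros in `𝔻` as `S`. So `S'`, and `T' = (c_P² - c_Q²) S'`, have `n - 1`.
-/

open scoped ComplexConjugate

section UnitCircle

lemma mul_conj_eq_one_of_norm_eq_one {z : ℂ} (hz : ‖z‖ = 1) : z * conj z = 1 := by
  rw [Complex.mul_conj', hz]
  simp

lemma norm_uexp (t : ℝ) : ‖uexp t‖ = 1 := by
  simp [uexp]

lemma conj_uexp (t : ℝ) : conj (uexp t) = uexp (-t) := by
  simp [uexp, ← Complex.exp_conj]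

lemma uexp_pow (t : ℝ) (k : ℕ) : uexp t ^ k = uexp (k * t) := by
  rw [uexp, uexp, ← Complex.exp_nat_mul]
  push_cast
  ring_nf

lemma uexp_mul_uexp_neg (t : ℝ) : uexp t * uexp (-t) = 1 := by
  simp [uexp, ← Complex.exp_add]

lemma uexp_eq_coe_circleExp (t : ℝ) : uexp t = Circle.exp t := by
  rw [Circle.coe_exp, uexp, mul_comm]

lemma uexp_sq_injOn : Set.InjOn (fun t => uexp t ^ 2) (Set.Ico 0 Real.pi) := by
  intro s hs t ht hst
  have h2 : Circle.exp (2 * s) = Circle.exp (2 * t) := by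
    apply Circle.ext
    rw [← uexp_eq_coe_circleExp, ← uexp_eq_coe_circleExp]
    simpa [uexp_pow] using hst
  have := Circle.exp_injOn_Ico (a := 0) (b := 2 * Real.pi) (by simp)
    ⟨by linarith [hs.1], by linarith [hs.2]⟩ ⟨by linarith [ht.1], by linarith [ht.2]⟩ h2
  linarith

end UnitCircle

section NInverse

lemma coeff_nInv (N : ℕ) (p : ℂ[X]) (k : ℕ) :
    (nInv N p).coeff k = conj (p.coeff (revAt N k)) := by
  rw [nInv, coeff_map, coeff_reflect]

lemma nInv_sub (N : ℕ) (p q : ℂ[X]) : nInv N (p - q) = nInv N p - nInv N q := by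
  simp [nInv, reflect_sub]

lemma nInv_C_mul (N : ℕ) (a : ℂ) (p : ℂ[X]) : nInv N (C a * p) = C (conj a) * nInv N p := by
  simp [nInv, reflect_C_mul]

lemma nInv_mul {M N : ℕ} {p q : ℂ[X]} (hp : p.natDegree ≤ M) (hq : q.natDegree ≤ N) :
    nInv (M + N) (p * q) = nInv M p * nInv N q := by
  rw [nInv, nInv, nInv, reflect_mul p q hp hq, Polynomial.map_mul]

lemma eval_nInv_of_norm_eq_one {N : ℕ} {p : ℂ[X]} (hp : p.natDegree ≤ N) {z : ℂ}
    (hz : ‖z‖ = 1) : (nInv N p).eval z = z ^ N * conj (p.eval z) := by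
  have hzz := mul_conj_eq_one_of_norm_eq_one hz
  let _ : Invertible (conj z) := ⟨z, hzz, by rwa [mul_comm]⟩
  have h : eval₂ (starRingEnd ℂ) z (reflect N p) * conj z ^ N = eval₂ (starRingEnd ℂ) (conj z) p :=
    eval₂_reflect_mul_pow (starRingEnd ℂ) (conj z) N p hp
  rw [nInv, eval_map, ← eval₂_at_apply, ← h, mul_left_comm, ← mul_pow, hzz, one_pow, mul_one]

lemma nInv_eq_C_sq_mul_of_selfInversive {N : ℕ} {c : ℂ} {p : ℂ[X]} (hc : ‖c‖ = 1)
    (h : nInv N (C c * p) = C c * p) : nInv N p = C (c ^ 2) * p := by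
  rw [nInv_C_mul] at h
  calc nInv N p = C c * (C (conj c) * nInv N p) := by
        rw [← mul_assoc, ← C_mul, mul_conj_eq_one_of_norm_eq_one hc, C_1, one_mul]
    _ = C (c ^ 2) * p := by rw [h, ← mul_assoc, ← C_mul, sq]

lemma coeff_X_mul_derivative (p : ℂ[X]) (k : ℕ) :
    (X * derivative p).coeff k = k * p.coeff k := by
  cases k with
  | zero => simp
  | succ k => rw [coeff_X_mul, coeff_derivative]; push_cast; ring

lemma natDegree_X_mul_derivative_le {N : ℕ} {p : ℂ[X]} (hp : p.natDegree ≤ N) :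
    (X * derivative p).natDegree ≤ N :=
  natDegree_le_iff_coeff_eq_zero.mpr fun k hk => by
    rw [coeff_X_mul_derivative, coeff_eq_zero_of_natDegree_lt (hp.trans_lt hk), mul_zero]

lemma nInv_X_mul_derivative {N : ℕ} {p : ℂ[X]} (hp : p.natDegree ≤ N) :
    nInv N (X * derivative p) = C (N : ℂ) * nInv N p - X * derivative (nInv N p) := by
  ext k
  rw [coeff_sub, coeff_C_mul, coeff_X_mul_derivative, coeff_nInv, coeff_nInv,
    coeff_X_mul_derivative, map_mul, map_natCast]
  rcases le_or_gt k N with hk | hk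
  · rw [revAt_le hk, Nat.cast_sub hk]; ring
  · rw [revAt_eq_self_of_lt hk, coeff_eq_zero_of_natDegree_lt (hp.trans_lt hk)]; simp

end NInverse

section Rotation

lemma coeff_comp_C_mul_X (p : ℂ[X]) (u : ℂ) (k : ℕ) :
    (p.comp (C u * X)).coeff k = u ^ k * p.coeff k := by
  induction p using Polynomial.induction_on' with
  | add p q hp hq => simp [add_comp, hp, hq, mul_add]
  | monomial j a =>
    rw [monomial_comp, mul_pow, ← C_pow, coeff_C_mul, coeff_C_mul_X_pow, coeff_monomial]
    split_ifs <;> simp_all [mul_comm]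

lemma natDegree_comp_C_mul_X_le (p : ℂ[X]) (u : ℂ) :
    (p.comp (C u * X)).natDegree ≤ p.natDegree :=
  natDegree_comp_le.trans <|
    (Nat.mul_le_mul_left _ (by simpa using natDegree_C_mul_X_pow_le u 1)).trans_eq (mul_one _)

lemma nInv_comp_C_mul_X {N : ℕ} {p : ℂ[X]} (hp : p.natDegree ≤ N) {u : ℂ} (hu : ‖u‖ = 1) :
    nInv N (p.comp (C u * X)) = C (conj u ^ N) * (nInv N p).comp (C u * X) := by
  ext k
  rw [coeff_C_mul, coeff_nInv, coeff_comp_C_mul_X, coeff_comp_C_mul_X, coeff_nInv, map_mul,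
    map_pow]
  rcases le_or_gt k N with hk | hk
  · rw [revAt_le hk, ← Nat.sub_add_cancel hk, pow_add, Nat.add_sub_cancel]
    have hk1 : conj u ^ k * u ^ k = 1 := by
      rw [← mul_pow, mul_comm, mul_conj_eq_one_of_norm_eq_one hu, one_pow]
    linear_combination (-(conj u ^ (N - k) * conj (p.coeff (N - k)))) * hk1
  · rw [revAt_eq_self_of_lt hk, coeff_eq_zero_of_natDegree_lt (hp.trans_lt hk)]
    simp

end Rotation

section ShiftWronskian

/-- `S = W(P, Q)` and `T = W(F, F^{*n})` in the theorem. -/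
noncomputable def shiftWronskian (lam : ℝ) (P Q : ℂ[X]) : ℂ[X] :=
  plusPoly lam P * minusPoly lam Q - minusPoly lam P * plusPoly lam Q

variable (lam : ℝ)

lemma shiftWronskian_C_mul_C_mul (a b : ℂ) (P Q : ℂ[X]) :
    shiftWronskian lam (C a * P) (C b * Q) = C (a * b) * shiftWronskian lam P Q := by
  simp only [shiftWronskian, plusPoly, minusPoly, mul_comp, C_comp, C_mul]
  ring

lemma shiftWronskian_sub_C_mul_sub (a b : ℂ) (P Q : ℂ[X]) :
    shiftWronskian lam (P - Q) (C a * P - C b * Q) = C (a - b) * shiftWronskian lam P Q := by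
  simp only [shiftWronskian, plusPoly, minusPoly, sub_comp, mul_comp, C_comp, C_sub]
  ring

variable {lam} {n : ℕ} {P Q : ℂ[X]}

lemma natDegree_shiftWronskian_le (hP : P.natDegree ≤ n) (hQ : Q.natDegree ≤ n) :
    (shiftWronskian lam P Q).natDegree ≤ 2 * n := by
  have hPp := (natDegree_comp_C_mul_X_le P (uexp (lam / 2))).trans hP
  have hPm := (natDegree_comp_C_mul_X_le P (uexp (-(lam / 2)))).trans hP
  have hQp := (natDegree_comp_C_mul_X_le Q (uexp (lam / 2))).trans hQ
  have hQm := (natDegree_comp_C_mul_X_le Q (uexp (-(lam / 2)))).trans hQ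
  refine (natDegree_sub_le _ _).trans (max_le ?_ ?_) <;>
    exact natDegree_mul_le.trans (by unfold plusPoly minusPoly; omega)

lemma nInv_shiftWronskian (hP : P.natDegree ≤ n) (hQ : Q.natDegree ≤ n) :
    nInv (2 * n) (shiftWronskian lam P Q) = shiftWronskian lam (nInv n P) (nInv n Q) := by
  have hvu : C (uexp (-(lam / 2)) ^ n) * C (uexp (lam / 2) ^ n) = (1 : ℂ[X]) := by
    rw [← C_mul, ← mul_pow, mul_comm, uexp_mul_uexp_neg, one_pow, C_1]
  have huv : C (uexp (lam / 2) ^ n) * C (uexp (-(lam / 2)) ^ n) = (1 : ℂ[X]) := by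
    rw [mul_comm, hvu]
  simp only [shiftWronskian, plusPoly, minusPoly]
  rw [nInv_sub, two_mul,
    nInv_mul ((natDegree_comp_C_mul_X_le _ _).trans hP) ((natDegree_comp_C_mul_X_le _ _).trans hQ),
    nInv_mul ((natDegree_comp_C_mul_X_le _ _).trans hP) ((natDegree_comp_C_mul_X_le _ _).trans hQ),
    nInv_comp_C_mul_X hP (norm_uexp _), nInv_comp_C_mul_X hP (norm_uexp _),
    nInv_comp_C_mul_X hQ (norm_uexp _), nInv_comp_C_mul_X hQ (norm_uexp _),
    conj_uexp, conj_uexp, neg_neg, mul_mul_mul_comm (C (uexp (-(lam / 2)) ^ n)),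
    mul_mul_mul_comm (C (uexp (lam / 2) ^ n)), hvu, huv, one_mul, one_mul]

lemma eval_shiftWronskian_nInv_ne_zero {F : ℂ[X]} (hF : F.natDegree ≤ n) {z : ℂ} (hz : ‖z‖ = 1)
    (hpos : 0 < (dQuot n lam F z).im) : (shiftWronskian lam F (nInv n F)).eval z ≠ 0 := by
  set u := uexp (lam / 2)
  set v := uexp (-(lam / 2))
  set a := F.eval (u * z)
  set b := F.eval (v * z)
  have hb : b ≠ 0 := by
    intro h
    simp [dQuot, b, v, h] at hpos
  set w := v ^ n * a * conj b
  have heval : (shiftWronskian lam F (nInv n F)).eval z = z ^ n * (w - conj w) := by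
    have hv : conj v = u := by rw [conj_uexp, neg_neg]
    simp only [shiftWronskian, plusPoly, minusPoly, eval_sub, eval_mul, eval_comp, eval_C,
      eval_X]
    rw [eval_nInv_of_norm_eq_one hF (by rw [norm_mul, norm_uexp, hz, one_mul]),
      eval_nInv_of_norm_eq_one hF (by rw [norm_mul, norm_uexp, hz, one_mul])]
    simp only [w, map_mul, map_pow, hv, Complex.conj_conj]
    ring
  have hw : w = dQuot n lam F z * (Complex.normSq b : ℂ) := by
    have hvn : v ^ n = uexp (-(n * lam) / 2) := by
      rw [uexp_pow]; congr 1; ring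
    rw [← Complex.mul_conj, dQuot, ← hvn]
    change v ^ n * a * conj b = v ^ n * a / b * (b * conj b)
    field_simp
  have him : 0 < w.im := by
    rw [hw, Complex.im_mul_ofReal]
    exact mul_pos hpos (Complex.normSq_pos.mpr hb)
  rw [heval, Complex.sub_conj]
  exact mul_ne_zero (pow_ne_zero _ (by rintro rfl; simp at hz))
    (mul_ne_zero (by exact_mod_cast mul_ne_zero two_ne_zero him.ne') Complex.I_ne_zero)

end ShiftWronskian

section ArgumentPrinciple

lemma circleIntegral_inv_sub_of_norm_ne_one {r : ℂ} (hr : ‖r‖ ≠ 1) :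
    (∮ z in C(0, 1), (z - r)⁻¹) = if ‖r‖ < 1 then 2 * Real.pi * I else 0 := by
  split_ifs with h
  · exact circleIntegral.integral_sub_inv_of_mem_ball (by simpa using h)
  · have hr' : 1 < ‖r‖ := lt_of_le_of_ne (not_lt.mp h) (Ne.symm hr)
    refine DiffContOnCl.circleIntegral_eq_zero zero_le_one <|
      (differentiable_id.sub_const r).diffContOnCl.inv fun z hz h => ?_
    rw [id_eq, sub_eq_zero] at h
    rw [closure_ball _ one_ne_zero, mem_closedBall_zero_iff, h] at hz
    exact hz.not_gt hr'

lemma circleIntegral_multiset_sum_inv_sub (s : Multiset ℂ) (hs : ∀ r ∈ s, ‖r‖ ≠ 1) :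
    (∮ z in C(0, 1), (s.map fun r => (z - r)⁻¹).sum) =
      2 * Real.pi * I * (s.filter (fun z => ‖z‖ < 1)).card := by
  induction s using Multiset.induction with
  | empty => simp [circleIntegral]
  | cons a s ih =>
    have ha := hs a (Multiset.mem_cons_self a s)
    have hs' := fun r hr => hs r (Multiset.mem_cons_of_mem hr)
    have hint : CircleIntegrable (fun z => (s.map fun r => (z - r)⁻¹).sum) 0 1 := by
      refine (continuousOn_multiset_sum s fun r hr => ?_).circleIntegrable zero_le_one
      refine (continuousOn_id.sub continuousOn_const).inv₀ fun z hz h => hs' r hr ?_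
      rw [Pi.sub_apply, id_eq, sub_eq_zero] at h
      simpa [← h] using hz
    simp only [Multiset.map_cons, Multiset.sum_cons]
    rw [circleIntegral.integral_add (circleIntegrable_sub_inv_iff.mpr (Or.inr (by simpa using ha)))
      hint, ih hs', circleIntegral_inv_sub_of_norm_ne_one ha, Multiset.filter_cons]
    split_ifs
    · simp only [Multiset.singleton_add, Multiset.card_cons, Nat.cast_add, Nat.cast_one]
      ring
    · simp

theorem circleIntegral_derivative_div_eval {p : ℂ[X]} (hp : ∀ z : ℂ, ‖z‖ = 1 → p.eval z ≠ 0) :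
    (∮ z in C(0, 1), p.derivative.eval z / p.eval z) =
      2 * Real.pi * I * (p.roots.filter (fun z => ‖z‖ < 1)).card := by
  have hroots : ∀ r ∈ p.roots, ‖r‖ ≠ 1 := fun r hr h => hp r h (isRoot_of_mem_roots hr)
  rw [← circleIntegral_multiset_sum_inv_sub _ hroots]
  refine circleIntegral.integral_congr zero_le_one fun z hz => ?_
  simp only [(IsAlgClosed.splits p).eval_derivative_div_eval_of_ne_zero (hp z (by simpa using hz)),
    one_div]

lemma circleIntegrable_derivative_div_eval {p : ℂ[X]} (hp : ∀ z : ℂ, ‖z‖ = 1 → p.eval z ≠ 0) :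
    CircleIntegrable (fun z => p.derivative.eval z / p.eval z) 0 1 :=
  (p.derivative.continuousOn.div p.continuousOn fun z hz =>
    hp z (by simpa using hz)).circleIntegrable zero_le_one

/-- `log (p / q)` is a primitive of `p'/p - q'/q` along the circle, as `p / q` stays in the right
half-plane. -/
theorem circleIntegral_derivative_div_eval_eq_of_re_div_pos {p q : ℂ[X]}
    (hq : ∀ z : ℂ, ‖z‖ = 1 → q.eval z ≠ 0)
    (hre : ∀ z : ℂ, ‖z‖ = 1 → 0 < (p.eval z / q.eval z).re) :
    (∮ z in C(0, 1), p.derivative.eval z / p.eval z) =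
      ∮ z in C(0, 1), q.derivative.eval z / q.eval z := by
  have hp : ∀ z : ℂ, ‖z‖ = 1 → p.eval z ≠ 0 := fun z hz h => by simpa [h] using hre z hz
  rw [← sub_eq_zero, ← circleIntegral.integral_sub (circleIntegrable_derivative_div_eval hp)
    (circleIntegrable_derivative_div_eval hq)]
  refine circleIntegral.integral_eq_zero_of_hasDerivWithinAt
    (f := fun z => log (p.eval z / q.eval z)) zero_le_one fun z hz => ?_
  have hz : ‖z‖ = 1 := by simpa using hz
  have hlog : HasDerivAt (fun w => log (p.eval w / q.eval w))
      ((p.derivative.eval z * q.eval z - p.eval z * q.derivative.eval z) / q.eval z ^ 2 /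
        (p.eval z / q.eval z)) z :=
    ((p.hasDerivAt z).div (q.hasDerivAt z) (hq z hz)).clog
      (Complex.mem_slitPlane_iff.mpr (Or.inl (hre z hz)))
  convert hlog.hasDerivWithinAt using 1
  field_simp [hp z hz, hq z hz]

theorem card_roots_filter_norm_lt_one_eq_of_re_div_pos {p q : ℂ[X]}
    (hq : ∀ z : ℂ, ‖z‖ = 1 → q.eval z ≠ 0)
    (hre : ∀ z : ℂ, ‖z‖ = 1 → 0 < (p.eval z / q.eval z).re) :
    (p.roots.filter (fun z => ‖z‖ < 1)).card = (q.roots.filter (fun z => ‖z‖ < 1)).card := by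
  have hp : ∀ z : ℂ, ‖z‖ = 1 → p.eval z ≠ 0 := fun z hz h => by simpa [h] using hre z hz
  have h := circleIntegral_derivative_div_eval_eq_of_re_div_pos hq hre
  rw [circleIntegral_derivative_div_eval hp, circleIntegral_derivative_div_eval hq] at h
  exact_mod_cast mul_left_cancel₀ (by simp [Real.pi_ne_zero]) h

/-- The winding number of `p` around the unit circle is `(1/2π) ∫ z p'(z)/p(z) dθ`; being real,
it equals the mean of `Re (z p'(z)/p(z))`. -/
theorem card_roots_filter_norm_lt_one_eq_of_re {p : ℂ[X]} (hp : ∀ z : ℂ, ‖z‖ = 1 → p.eval z ≠ 0)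
    {c : ℝ} (hre : ∀ z : ℂ, ‖z‖ = 1 → (z * p.derivative.eval z / p.eval z).re = c) :
    ((p.roots.filter (fun z => ‖z‖ < 1)).card : ℝ) = c := by
  set h : ℝ → ℂ := fun t =>
    circleMap 0 1 t * p.derivative.eval (circleMap 0 1 t) / p.eval (circleMap 0 1 t)
  have hmem : ∀ t, ‖circleMap 0 1 t‖ = 1 := fun t => by simp
  have hcont : Continuous h :=
    ((continuous_circleMap 0 1).mul (p.derivative.continuous.comp (continuous_circleMap 0 1))).div
      (p.continuous.comp (continuous_circleMap 0 1)) fun t => hp _ (hmem t)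
  have hint : (∫ t in (0 : ℝ)..2 * Real.pi, h t) =
      2 * Real.pi * (p.roots.filter (fun z => ‖z‖ < 1)).card := by
    have harg := circleIntegral_derivative_div_eval hp
    simp only [circleIntegral, deriv_circleMap, smul_eq_mul] at harg
    refine mul_left_cancel₀ I_ne_zero ?_
    rw [← intervalIntegral.integral_const_mul]
    convert harg using 1
    · exact intervalIntegral.integral_congr fun θ _ => by simp only [h]; ring
    · ring
  have hre_int : ∫ t in (0 : ℝ)..2 * Real.pi, (h t).re = (∫ t in (0 : ℝ)..2 * Real.pi, h t).re :=
    intervalIntegral.intervalIntegral_re (hcont.intervalIntegrable 0 (2 * Real.pi))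
  rw [hint, intervalIntegral.integral_congr (g := fun _ => c) fun t _ => hre _ (hmem t)] at hre_int
  have h2pi : 2 * Real.pi * c = 2 * Real.pi * (p.roots.filter (fun z => ‖z‖ < 1)).card := by
    simpa using hre_int
  exact (mul_left_cancel₀ (by positivity) h2pi).symm

end ArgumentPrinciple

section SelfInversive

variable {N : ℕ} {S : ℂ[X]} {ω : ℂ}

/-- On the circle, `z^N conj S(z) = ω S(z)` and `z^N conj (z S'(z)) = ω (N S(z) - z S'(z))`
combine to `2 Re (z S' / S) = N`. -/
lemma two_mul_re_mul_derivative_div (hdeg : S.natDegree ≤ N) (hsym : nInv N S = C ω * S)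
    {z : ℂ} (hz : ‖z‖ = 1) (hS : S.eval z ≠ 0) :
    2 * (z * S.derivative.eval z / S.eval z).re = N := by
  set a := S.eval z
  set b := z * S.derivative.eval z
  have h1 : z ^ N * conj a = ω * a := by
    rw [← eval_nInv_of_norm_eq_one hdeg hz, hsym, eval_C_mul]
  have h2 : z ^ N * conj b = ω * (N * a - b) := by
    have h := eval_nInv_of_norm_eq_one (natDegree_X_mul_derivative_le hdeg) hz
    rw [nInv_X_mul_derivative hdeg, hsym, derivative_C_mul] at h
    simp only [eval_mul, eval_sub, eval_C, eval_X] at h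
    exact h.symm.trans (by ring)
  have hz0 : z ^ N ≠ 0 := pow_ne_zero _ (by rintro rfl; simp at hz)
  have hkey : b * conj a + conj b * a = N * (a * conj a) :=
    mul_left_cancel₀ hz0 (by linear_combination (b - N * a) * h1 + a * h2)
  have hsum : b / a + conj (b / a) = N := by
    rw [map_div₀, div_add_div _ _ hS ((_root_.map_ne_zero _).mpr hS), div_eq_iff
      (mul_ne_zero hS ((_root_.map_ne_zero _).mpr hS))]
    linear_combination hkey
  rw [Complex.add_conj] at hsum
  exact_mod_cast hsum

theorem card_roots_derivative_filter_norm_lt_one {n : ℕ} (hn : 1 ≤ n)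
    (hdeg : S.natDegree ≤ 2 * n) (hsym : nInv (2 * n) S = C ω * S)
    (hS : ∀ z : ℂ, ‖z‖ = 1 → S.eval z ≠ 0) :
    (S.derivative.roots.filter (fun z => ‖z‖ < 1)).card = n - 1 := by
  have hre : ∀ z : ℂ, ‖z‖ = 1 → (z * S.derivative.eval z / S.eval z).re = n := fun z hz => by
    have h := two_mul_re_mul_derivative_div hdeg hsym hz (hS z hz)
    push_cast at h
    linarith
  have hcountS : (S.roots.filter (fun z => ‖z‖ < 1)).card = n := by
    exact_mod_cast card_roots_filter_norm_lt_one_eq_of_re hS hre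
  have hS' : S.derivative ≠ 0 := by
    intro h
    have := hre 1 (by simp)
    have hn' : (1 : ℝ) ≤ n := by exact_mod_cast hn
    simp only [h, eval_zero, mul_zero, zero_div, zero_re] at this
    linarith
  have hcount := card_roots_filter_norm_lt_one_eq_of_re_div_pos (p := X * S.derivative) hS
    fun z hz => by simpa [hre z hz] using (show (0 : ℝ) < n by exact_mod_cast hn)
  rw [hcountS, roots_mul (mul_ne_zero X_ne_zero hS'), roots_X, Multiset.filter_add,
    Multiset.card_add] at hcount
  simp only [Multiset.filter_singleton, norm_zero, zero_lt_one, ↓reduceIte,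
    Multiset.card_singleton] at hcount
  omega

end SelfInversive

theorem stmt13_general (n : ℕ) (hn : 1 ≤ n) (lam : ℝ) (h0 : 0 < lam)
    (P Q : Polynomial ℂ)
    (hP : P ∈ polyOn n {z : ℂ | ‖z‖ = 1})
    (hQ : Q ∈ polyOn n {z : ℂ | ‖z‖ = 1})
    (cP cQ : ℂ) (tP tQ : ℝ)
    (htP : 0 ≤ tP ∧ tP < Real.pi) (hcP : cP = uexp tP)
    (hsP : nInv n (C cP * P) = C cP * P)
    (htQ : 0 ≤ tQ ∧ tQ < Real.pi) (hcQ : cQ = uexp tQ)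
    (hsQ : nInv n (C cQ * Q) = C cQ * Q)
    (hcc : cP ≠ cQ)
    (F S T : Polynomial ℂ) (hF : F = P - Q)
    (hS : S = plusPoly lam P * minusPoly lam Q - minusPoly lam P * plusPoly lam Q)
    (hT : T = plusPoly lam F * minusPoly lam (nInv n F) -
      minusPoly lam F * plusPoly lam (nInv n F))
    (hmem : F ∈ Dset n lam \ Tstrict n lam) :
    (S.derivative.roots.filter (fun z => ‖z‖ < 1)).card = n - 1 ∧
    (T.derivative.roots.filter (fun z => ‖z‖ < 1)).card = n - 1 := by
  change S = shiftWronskian lam P Q at hS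
  change T = shiftWronskian lam F (nInv n F) at hT
  have hPsym := nInv_eq_C_sq_mul_of_selfInversive (hcP ▸ norm_uexp tP) hsP
  have hQsym := nInv_eq_C_sq_mul_of_selfInversive (hcQ ▸ norm_uexp tQ) hsQ
  have hTS : T = C (cP ^ 2 - cQ ^ 2) * S := by
    rw [hT, hS, hF, nInv_sub, hPsym, hQsym, shiftWronskian_sub_C_mul_sub]
  have hc : cP ^ 2 - cQ ^ 2 ≠ 0 := by
    rw [sub_ne_zero, hcP, hcQ]
    exact fun h => hcc (by rw [hcP, hcQ, uexp_sq_injOn htP htQ h])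
  obtain ⟨hFdeg, hFD⟩ : F.natDegree = n ∧ ∀ z : ℂ, 1 ≤ ‖z‖ → 0 < (dQuot n lam F z).im := by
    obtain ⟨hD | hD, hnT⟩ := hmem
    · exact absurd hD hnT
    · rwa [if_neg h0.ne'] at hD
  have hSz : ∀ z : ℂ, ‖z‖ = 1 → S.eval z ≠ 0 := fun z hz hSz =>
    eval_shiftWronskian_nInv_ne_zero hFdeg.le hz (hFD z hz.ge)
      (by rw [← hT, hTS, eval_mul, hSz, mul_zero])
  have hSsym : nInv (2 * n) S = C (cP ^ 2 * cQ ^ 2) * S := by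
    rw [hS, nInv_shiftWronskian hP.1.le hQ.1.le, hPsym, hQsym, shiftWronskian_C_mul_C_mul]
  have hcount := card_roots_derivative_filter_norm_lt_one hn
    (hS ▸ natDegree_shiftWronskian_le hP.1.le hQ.1.le) hSsym hSz
  refine ⟨hcount, ?_⟩
  rwa [hTS, derivative_C_mul, roots_C_mul _ hc]

theorem stmt13 (n : ℕ) (hn : 1 ≤ n) (lam : ℝ) (h0 : 0 < lam) (h1 : lam < 2 * Real.pi / n)
    (P Q : Polynomial ℂ)
    (hP : P ∈ polyOn n {z : ℂ | ‖z‖ = 1})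
    (hQ : Q ∈ polyOn n {z : ℂ | ‖z‖ = 1})
    (cP cQ : ℂ) (tP tQ : ℝ)
    (htP : 0 ≤ tP ∧ tP < Real.pi) (hcP : cP = uexp tP)
    (hsP : nInv n (C cP * P) = C cP * P)
    (htQ : 0 ≤ tQ ∧ tQ < Real.pi) (hcQ : cQ = uexp tQ)
    (hsQ : nInv n (C cQ * Q) = C cQ * Q)
    (hcc : cP ≠ cQ)
    (F S T : Polynomial ℂ) (hF : F = P - Q)
    (hS : S = plusPoly lam P * minusPoly lam Q - minusPoly lam P * plusPoly lam Q)
    (hT : T = plusPoly lam F * minusPoly lam (nInv n F) -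
      minusPoly lam F * plusPoly lam (nInv n F))
    (hmem : F ∈ Dset n lam \ Tstrict n lam) :
    (S.derivative.roots.filter (fun z => ‖z‖ < 1)).card = n - 1 ∧
    (T.derivative.roots.filter (fun z => ‖z‖ < 1)).card = n - 1 :=
  stmt13_general n hn lam h0 P Q hP hQ cP cQ tP tQ htP hcP hsP htQ hcQ hsQ hcc F S T hF hS hT hmem
end
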